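/- arXiv:1509.02188 — 2 statements merged into one kernel-verified Lean document; each statement's English description precedes it below -/
import Mathlib

section
/- Let R be a topological ring with identity and let 𝓘 be a family of closed two-sided ideals of R that are pairwise topologically co-maximal and satisfy: for every neighborhood ε of 0, the set of I ∈ 𝓘 with I + ε ≠ R is finite. Equip Π = ∏_{I ∈ 𝓘} R/I with the ring topology whose fundamental system of neighborhoods of 0 is the family of sets U(ε) = {(a_I + I)_{I ∈ 𝓘} : a_I ∈ I + ε for all I ∈ 𝓘}, for ε a neighborhood of 0 in R. Then the canonical homomorphism φ : R → Π, φ(r) = (r + I)_{I ∈ 𝓘}, is continuous and its image is dense in Π. -/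
/-!
Topological co-maximality survives finite intersections: if `I + J` and `I + K` are dense, so is
their pointwise product, which lies in `I + J ⊓ K`. Hence for a finite family `F` each `I ∈ F` is
topologically co-maximal with the intersection `J_I` of the other members, and for targets `b_I`
and a neighbourhood `ε` of `0` one picks `j_I ∈ J_I` with `j_I - b_I ∈ I + ε`; then `∑ j_I` solves
all the approximate congruences at once. In the product, a basic neighbourhood `U(ε)` only
constrains the finitely many coordinates with `I + ε ≠ R`, which gives density.
-/

open Pointwise

namespace TwoSidedIdeal

variable {R : Type*} [Ring R]

lemma add_mul_add_subset_add_inf (I J K : TwoSidedIdeal R) :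
    ((I : Set R) + (J : Set R)) * ((I : Set R) + (K : Set R)) ⊆
      (I : Set R) + ((J ⊓ K : TwoSidedIdeal R) : Set R) := by
  rintro _ ⟨_, ⟨i, hi, j, hj, rfl⟩, _, ⟨i', hi', k, hk, rfl⟩, rfl⟩
  refine ⟨i * i' + i * k + j * i', ?_, j * k, ⟨J.mul_mem_right _ _ hj,
    K.mul_mem_left _ _ hk⟩, by noncomm_ring⟩
  exact I.add_mem (I.add_mem (I.mul_mem_right _ _ hi) (I.mul_mem_right _ _ hi))
    (I.mul_mem_left _ _ hi')

variable [TopologicalSpace R] [IsTopologicalRing R]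

lemma exists_mem_sub_mem_add_of_dense_add {I J : TwoSidedIdeal R}
    (hIJ : Dense ((I : Set R) + (J : Set R))) (b : R) {ε : Set R} (hε : ε ∈ nhds (0 : R)) :
    ∃ j ∈ J, j - b ∈ (I : Set R) + ε := by
  obtain ⟨_, ⟨i, hi, j, hj, rfl⟩, hs⟩ := mem_closure_iff_nhds_zero.mp (hIJ b) ε hε
  exact ⟨j, hj, Set.mem_add.mpr ⟨-i, I.neg_mem hi, i + j - b, hs, by abel⟩⟩

lemma dense_add_inf {I J K : TwoSidedIdeal R} (hJ : Dense ((I : Set R) + (J : Set R)))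
    (hK : Dense ((I : Set R) + (K : Set R))) :
    Dense ((I : Set R) + ((J ⊓ K : TwoSidedIdeal R) : Set R)) := by
  have hmul : Dense (((I : Set R) + (J : Set R)) * ((I : Set R) + (K : Set R))) := by
    rw [← Set.image_mul_prod]
    exact (Function.Surjective.denseRange fun r => ⟨(r, 1), mul_one r⟩).dense_image
      continuous_mul (hJ.prod hK)
  exact hmul.mono (add_mul_add_subset_add_inf I J K)

lemma dense_add_finset_inf {ι : Type*} (I : TwoSidedIdeal R) (J : ι → TwoSidedIdeal R)
    (s : Finset ι) (hs : ∀ i ∈ s, Dense ((I : Set R) + (J i : Set R))) :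
    Dense ((I : Set R) + ((s.inf J : TwoSidedIdeal R) : Set R)) := by
  classical
  induction s using Finset.induction_on with
  | empty => exact dense_univ.mono fun x _ => ⟨0, I.zero_mem, x, trivial, zero_add x⟩
  | insert i s _ ih =>
    rw [Finset.inf_insert]
    exact dense_add_inf (hs i (Finset.mem_insert_self i s))
      (ih fun k hk => hs k (Finset.mem_insert_of_mem hk))

lemma exists_forall_sub_mem_add_of_pairwise_dense {ι : Type*} (I : ι → TwoSidedIdeal R)
    (hI : Pairwise fun i k => Dense ((I i : Set R) + (I k : Set R))) (F : Finset ι) (b : ι → R)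
    {ε : Set R} (hε : ε ∈ nhds (0 : R)) :
    ∃ r : R, ∀ i ∈ F, r - b i ∈ (I i : Set R) + ε := by
  classical
  have hsep : ∀ i ∈ F, ∃ j ∈ (F.erase i).inf I, j - b i ∈ (I i : Set R) + ε := fun i _ =>
    exists_mem_sub_mem_add_of_dense_add (dense_add_finset_inf (I i) I (F.erase i)
      fun k hk => hI (Finset.ne_of_mem_erase hk).symm) (b i) hε
  choose! j hjinf hjb using hsep
  refine ⟨∑ k ∈ F, j k, fun i hi => ?_⟩
  have hrest : ∑ k ∈ F.erase i, j k ∈ I i := sum_mem fun k hk =>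
    SetLike.le_def.mp
      (Finset.inf_le <| Finset.mem_erase.mpr ⟨(Finset.ne_of_mem_erase hk).symm, hi⟩)
      (hjinf k (Finset.mem_of_mem_erase hk))
  obtain ⟨a, ha, d, hd, had⟩ := Set.mem_add.mp (hjb i hi)
  refine ⟨a + ∑ k ∈ F.erase i, j k, (I i).add_mem ha hrest, d, hd, ?_⟩
  rw [← Finset.add_sum_erase F j hi, ← sub_add_eq_add_sub, ← had, add_right_comm]

end TwoSidedIdeal

theorem chinese_remainder_approximation_general {R : Type*} [Ring R] [TopologicalSpace R]
    [IsTopologicalRing R] (𝓘 : Set (TwoSidedIdeal R))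
    (hTCM : 𝓘.Pairwise fun I J => closure ((I : Set R) + (J : Set R)) = Set.univ)
    (hfin : ∀ ε ∈ nhds (0 : R), {I ∈ 𝓘 | (I : Set R) + ε ≠ Set.univ}.Finite)
    (t : TopologicalSpace (∀ I : 𝓘, (I : TwoSidedIdeal R).ringCon.Quotient))
    (htr : @IsTopologicalRing _ t _)
    (hbasis : (@nhds _ t 0).HasBasis (fun ε : Set R => ε ∈ nhds (0 : R))
      (fun ε => {x : ∀ I : 𝓘, (I : TwoSidedIdeal R).ringCon.Quotient |
        ∀ I : 𝓘, ∃ a ∈ ((I : TwoSidedIdeal R) : Set R) + ε,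
          (I : TwoSidedIdeal R).ringCon.mk' a = x I})) :
    @Continuous R _ _ t (fun r (I : 𝓘) => (I : TwoSidedIdeal R).ringCon.mk' r) ∧
    @Dense _ t (Set.range (fun r (I : 𝓘) => (I : TwoSidedIdeal R).ringCon.mk' r)) := by
  let := t
  let φ := RingHom.pi fun I : 𝓘 => (I : TwoSidedIdeal R).ringCon.mk'
  refine ⟨continuous_of_continuousAt_zero φ ?_, fun x => ?_⟩
  · rw [ContinuousAt, map_zero, hbasis.tendsto_right_iff]
    exact fun ε hε => Filter.mem_of_superset hε fun r hr I =>
      ⟨0 + r, Set.add_mem_add (I : TwoSidedIdeal R).zero_mem hr, by rw [zero_add]; rfl⟩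
  · rw [mem_closure_iff_nhds_zero]
    intro U hU
    obtain ⟨ε, hε, hεU⟩ := hbasis.mem_iff.mp hU
    choose b hb using fun I : 𝓘 => Quotient.mk''_surjective (x I)
    have hpair : Pairwise fun I K : 𝓘 => Dense (((I : TwoSidedIdeal R) : Set R) + (K : Set R)) :=
      fun I K hIK => dense_iff_closure_eq.mpr (hTCM I.2 K.2 (Subtype.val_injective.ne hIK))
    have hF := (hfin ε hε).preimage (f := ((↑) : 𝓘 → TwoSidedIdeal R))
      Subtype.val_injective.injOn
    obtain ⟨r, hr⟩ := TwoSidedIdeal.exists_forall_sub_mem_add_of_pairwise_dense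
      (fun I : 𝓘 => (I : TwoSidedIdeal R)) hpair hF.toFinset b hε
    refine ⟨φ r, ⟨r, rfl⟩, hεU fun I => ⟨r - b I, ?_, by rw [map_sub, Pi.sub_apply, ← hb I]; rfl⟩⟩
    by_cases hI : ((I : TwoSidedIdeal R) : Set R) + ε = Set.univ
    · exact hI ▸ Set.mem_univ _
    · exact hr I (hF.mem_toFinset.mpr ⟨I.2, hI⟩)

/-- The Chinese Remainder Approximation Theorem. Let `𝓘` be a family of closed two-sided
ideals of a topological ring `R`, pairwise topologically co-maximal, such that for every
neighborhood `ε` of `0` only finitely many `I ∈ 𝓘` fail to satisfy `I + ε = R`. Equip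
`Π = ∏_{I ∈ 𝓘} R/I` with the ring topology whose fundamental system of neighborhoods of `0`
is given by the sets `U(ε) = {(a_I + I)_I : a_I ∈ I + ε for all I}`. Then the canonical
homomorphism `φ : R → Π`, `φ(r) = (r + I)_I`, is continuous and has dense image. -/
theorem chinese_remainder_approximation {R : Type*} [Ring R] [TopologicalSpace R]
    [IsTopologicalRing R] [T2Space R] (𝓘 : Set (TwoSidedIdeal R))
    (hclosed : ∀ I ∈ 𝓘, IsClosed (I : Set R))
    (hTCM : 𝓘.Pairwise fun I J => closure ((I : Set R) + (J : Set R)) = Set.univ)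
    (hfin : ∀ ε ∈ nhds (0 : R), {I ∈ 𝓘 | (I : Set R) + ε ≠ Set.univ}.Finite)
    (t : TopologicalSpace (∀ I : 𝓘, (I : TwoSidedIdeal R).ringCon.Quotient))
    (htr : @IsTopologicalRing _ t _)
    (hbasis : (@nhds _ t 0).HasBasis (fun ε : Set R => ε ∈ nhds (0 : R))
      (fun ε => {x : ∀ I : 𝓘, (I : TwoSidedIdeal R).ringCon.Quotient |
        ∀ I : 𝓘, ∃ a ∈ ((I : TwoSidedIdeal R) : Set R) + ε,
          (I : TwoSidedIdeal R).ringCon.mk' a = x I})) :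
    @Continuous R _ _ t (fun r (I : 𝓘) => (I : TwoSidedIdeal R).ringCon.mk' r) ∧
    @Dense _ t (Set.range (fun r (I : 𝓘) => (I : TwoSidedIdeal R).ringCon.mk' r)) :=
  chinese_remainder_approximation_general 𝓘 hTCM hfin t htr hbasis
end

section
/- Let Ω ⊆ ℂ be a nonempty open connected set and let {zₙ}ₙ∈ℕ ⊆ Ω be a sequence of distinct points having no limit point in Ω. Then for every sequence of positive integers {mₙ}ₙ∈ℕ and every choice of complex numbers w_{1,n}, …, w_{mₙ,n} ∈ ℂ for each n, there exists an analytic function f on Ω such that f^{(k)}(zₙ) = k!·w_{k,n} for every n ∈ ℕ and every 1 ≤ k ≤ mₙ. -/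
/-!
The function is a series `∑ Fₙ` with `Fₙ = Pₙ Θₙ`. The polynomial `Pₙ` (Hermite interpolation)
vanishes to order `m j + 1` at the earlier points `z j` and corrects the jet at `z n` of the
partial sum `∑_{i<n} Fᵢ`. The factor `Θₙ = 1 - (1 - Gₙ ^ N) ^ (m n + 1)` is `≡ 1` to order
`m n + 1` at `z n` and is tiny wherever `‖Gₙ‖ ≤ 1/2`, where `Gₙ` is holomorphic on `Ω` with
`Gₙ (z n) = 1`: a Möbius map with its pole at the boundary point nearest to `z n`, or at `∞`.
Since `z n` eventually leaves every compact subset of `Ω`, `Gₙ → 0` locally uniformly on `Ω`.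
Hence `‖Fₙ‖ ≤ 2⁻ⁿ` eventually on each compact set, the series converges locally uniformly, the
jet at `z j` is frozen from the `(j+1)`-st partial sum on, and derivatives pass to the limit.
-/

open Filter Topology Metric Finset

open scoped Nat

theorem norm_one_sub_one_sub_pow_le {R : Type*} [NormedRing R] [NormOneClass R] {x : R}
    (hx : ‖x‖ ≤ 1) (n : ℕ) : ‖1 - (1 - x) ^ n‖ ≤ 2 ^ n * ‖x‖ := by
  induction n with
  | zero => simp
  | succ n ih =>
    have h₁ : ‖(1 - x) ^ n‖ ≤ 2 ^ n :=
      (norm_pow_le _ n).trans (pow_le_pow_left₀ (norm_nonneg _)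
        ((norm_sub_le _ _).trans (by rw [norm_one]; linarith)) n)
    calc ‖1 - (1 - x) ^ (n + 1)‖ = ‖(1 - (1 - x) ^ n) + (1 - x) ^ n * x‖ := by
          congr 1; noncomm_ring
      _ ≤ 2 ^ n * ‖x‖ + 2 ^ n * ‖x‖ :=
          (norm_add_le _ _).trans (add_le_add ih ((norm_mul_le _ _).trans
            (mul_le_mul_of_nonneg_right h₁ (norm_nonneg _))))
      _ = 2 ^ (n + 1) * ‖x‖ := by ring

section Jets

variable {𝕜 : Type*} [NontriviallyNormedField 𝕜]

theorem natCast_le_analyticOrderAt_prod_pow_mul {ι : Type*} (s : Finset ι) (p : ι → 𝕜)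
    (e : ι → ℕ) {R : 𝕜 → 𝕜} {i : ι} (hi : i ∈ s) (hR : AnalyticAt 𝕜 R (p i)) :
    (e i : ℕ∞) ≤ analyticOrderAt (fun z => (∏ j ∈ s, (z - p j) ^ e j) * R z) (p i) := by
  classical
  rw [natCast_le_analyticOrderAt (by fun_prop)]
  refine ⟨fun z => (∏ j ∈ s.erase i, (z - p j) ^ e j) * R z, by fun_prop,
    .of_forall fun z => ?_⟩
  rw [← Finset.mul_prod_erase s _ hi, smul_eq_mul, mul_assoc]

theorem exists_analyticOnNhd_le_analyticOrderAt_sub_one_and_norm_le {Ω : Set 𝕜} {G : 𝕜 → 𝕜}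
    (hG : AnalyticOnNhd 𝕜 G Ω) {z₀ : 𝕜} (hz₀ : z₀ ∈ Ω) (hG₁ : G z₀ = 1) (n : ℕ) {δ : ℝ}
    (hδ : 0 < δ) :
    ∃ Θ : 𝕜 → 𝕜, AnalyticOnNhd 𝕜 Θ Ω ∧ (n : ℕ∞) ≤ analyticOrderAt (Θ - 1) z₀ ∧
      ∀ z, ‖G z‖ ≤ 1 / 2 → ‖Θ z‖ ≤ δ := by
  obtain ⟨N, hN⟩ := exists_pow_lt_of_lt_one (div_pos hδ (pow_pos two_pos n))
    (by norm_num : (1 / 2 : ℝ) < 1)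
  refine ⟨fun z => 1 - (1 - G z ^ N) ^ n, fun z hz => by have := hG z hz; fun_prop, ?_,
    fun z hz => ?_⟩
  · have hvan : AnalyticAt 𝕜 (fun z => 1 - G z ^ N) z₀ := by
      have := hG z₀ hz₀; fun_prop
    have h₁ : 1 ≤ analyticOrderAt (fun z => 1 - G z ^ N) z₀ :=
      Order.one_le_iff_ne_zero.2 (hvan.analyticOrderAt_ne_zero.2 (by simp [hG₁]))
    have hΘ : ((fun z => 1 - (1 - G z ^ N) ^ n) - 1) = -(fun z => 1 - G z ^ N) ^ n := by
      ext z; simp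
    rw [hΘ, analyticOrderAt_neg, analyticOrderAt_pow hvan]
    simpa using mul_le_mul_right h₁ (n : ℕ∞)
  · have hGN : ‖G z ^ N‖ ≤ (1 / 2) ^ N := by
      rw [norm_pow]; exact pow_le_pow_left₀ (norm_nonneg _) hz N
    calc ‖1 - (1 - G z ^ N) ^ n‖ ≤ 2 ^ n * ‖G z ^ N‖ :=
          norm_one_sub_one_sub_pow_le (hGN.trans (pow_le_one₀ (by norm_num) (by norm_num))) n
      _ ≤ 2 ^ n * (δ / 2 ^ n) := by gcongr; exact hGN.trans hN.le
      _ = δ := by field_simp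

variable [CharZero 𝕜]

theorem natCast_le_analyticOrderAt_sub_iff_iteratedDeriv_eq {E : Type*} [NormedAddCommGroup E]
    [NormedSpace 𝕜 E] [CompleteSpace E] {f g : 𝕜 → E} {z₀ : 𝕜}
    (hf : AnalyticAt 𝕜 f z₀) (hg : AnalyticAt 𝕜 g z₀) {n : ℕ} :
    n ≤ analyticOrderAt (f - g) z₀ ↔ ∀ k < n, iteratedDeriv k f z₀ = iteratedDeriv k g z₀ := by
  rw [natCast_le_analyticOrderAt_iff_iteratedDeriv_eq_zero (hf.sub hg)]
  refine forall₂_congr fun k _ => ?_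
  rw [iteratedDeriv_sub hf.contDiffAt hg.contDiffAt, sub_eq_zero]

attribute [local simp] Nat.factorial_ne_zero in
theorem exists_analyticOnNhd_iteratedDeriv_eq {E : Type*} [NormedAddCommGroup E]
    [NormedSpace 𝕜 E] (z₀ : 𝕜) (c : ℕ → E) (n : ℕ) :
    ∃ P : 𝕜 → E, AnalyticOnNhd 𝕜 P Set.univ ∧ ∀ k < n, iteratedDeriv k P z₀ = c k := by
  set Q : 𝕜 → E := fun z => ∑ i ∈ range n, (z ^ i / i !) • c i
  refine ⟨fun z => Q (z - z₀), fun z _ => by fun_prop, fun k hk => ?_⟩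
  simp only [iteratedDeriv_comp_sub_const, sub_self]
  simp (disch := fun_prop) only [Q, iteratedDeriv_fun_sum, iteratedDeriv_smul_const,
    iteratedDeriv_div_const, iteratedDeriv_fun_pow_zero]
  simp [ite_div, Finset.sum_ite_eq_of_mem _ _ _ (Finset.mem_range.mpr hk)]

variable [CompleteSpace 𝕜] {ι : Type*} (s : Finset ι) (p : ι → 𝕜) (e : ι → ℕ)

theorem exists_analyticOnNhd_iteratedDeriv_eq_and_le_analyticOrderAt {z₀ : 𝕜}
    (hp : ∀ i ∈ s, p i ≠ z₀) (c : ℕ → 𝕜) (n : ℕ) :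
    ∃ P : 𝕜 → 𝕜, AnalyticOnNhd 𝕜 P Set.univ ∧
      (∀ i ∈ s, (e i : ℕ∞) ≤ analyticOrderAt P (p i)) ∧
      ∀ k < n, iteratedDeriv k P z₀ = c k := by
  set H : 𝕜 → 𝕜 := fun z => ∏ j ∈ s, (z - p j) ^ e j
  have hH : ∀ z, AnalyticAt 𝕜 H z := fun z => by fun_prop
  have hH₀ : H z₀ ≠ 0 :=
    prod_ne_zero_iff.2 fun j hj => pow_ne_zero _ (sub_ne_zero.2 (hp j hj).symm)
  obtain ⟨D, hD, hDc⟩ := exists_analyticOnNhd_iteratedDeriv_eq z₀ c n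
  have hφ : AnalyticAt 𝕜 (fun z => D z / H z) z₀ := (hD z₀ trivial).div (hH z₀) hH₀
  obtain ⟨R, hR, hRφ⟩ :=
    exists_analyticOnNhd_iteratedDeriv_eq z₀ (fun k => iteratedDeriv k (fun z => D z / H z) z₀) n
  have hHR : ∀ z, AnalyticAt 𝕜 (fun z => H z * R z) z := fun z => (hH z).mul (hR z trivial)
  refine ⟨fun z => H z * R z, fun z _ => hHR z,
    fun i hi => natCast_le_analyticOrderAt_prod_pow_mul s p e hi (hR _ trivial),
    fun k hk => ?_⟩
  rw [← hDc k hk]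
  refine (natCast_le_analyticOrderAt_sub_iff_iteratedDeriv_eq (hHR z₀) (hD z₀ trivial)).1 ?_ k hk
  have hRφ' : (n : ℕ∞) ≤ analyticOrderAt (R - fun z => D z / H z) z₀ :=
    (natCast_le_analyticOrderAt_sub_iff_iteratedDeriv_eq (hR z₀ trivial) hφ).2 hRφ
  have hfac : (fun z => H z * R z) - D =ᶠ[𝓝 z₀] H * (R - fun z => D z / H z) := by
    filter_upwards [(hH z₀).continuousAt.eventually_ne hH₀] with z hz
    simp only [Pi.sub_apply, Pi.mul_apply]
    field_simp
  rw [analyticOrderAt_congr hfac, analyticOrderAt_mul (hH z₀) ((hR z₀ trivial).sub hφ)]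
  exact hRφ'.trans le_add_self

theorem exists_analyticOnNhd_iteratedDeriv_eq_and_norm_le {Ω : Set 𝕜} {G : 𝕜 → 𝕜}
    (hG : AnalyticOnNhd 𝕜 G Ω) {z₀ : 𝕜} (hz₀ : z₀ ∈ Ω) (hG₁ : G z₀ = 1)
    (hpΩ : ∀ i ∈ s, p i ∈ Ω) (hp : ∀ i ∈ s, p i ≠ z₀) (c : ℕ → 𝕜) (n : ℕ) {K : Set 𝕜}
    (hK : IsCompact K) {ε : ℝ} (hε : 0 < ε) :
    ∃ F : 𝕜 → 𝕜, AnalyticOnNhd 𝕜 F Ω ∧ (∀ i ∈ s, ∀ k < e i, iteratedDeriv k F (p i) = 0) ∧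
      (∀ k < n, iteratedDeriv k F z₀ = c k) ∧ ∀ z ∈ K, ‖G z‖ ≤ 1 / 2 → ‖F z‖ ≤ ε := by
  obtain ⟨P, hP, hPp, hPc⟩ :=
    exists_analyticOnNhd_iteratedDeriv_eq_and_le_analyticOrderAt s p e hp c n
  obtain ⟨C, hC⟩ := hK.exists_bound_of_continuousOn (hP.continuousOn.mono (Set.subset_univ K))
  have hC₀ : 0 < max C 0 + 1 := by positivity
  obtain ⟨Θ, hΘ, hΘ₁, hΘε⟩ :=
    exists_analyticOnNhd_le_analyticOrderAt_sub_one_and_norm_le hG hz₀ hG₁ n (div_pos hε hC₀)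
  have hPΘ : AnalyticOnNhd 𝕜 (P * Θ) Ω := fun z hz => (hP z trivial).mul (hΘ z hz)
  refine ⟨P * Θ, hPΘ, fun i hi k hk => ?_, fun k hk => ?_, fun z hz hGz => ?_⟩
  · refine (natCast_le_analyticOrderAt_iff_iteratedDeriv_eq_zero (hPΘ _ (hpΩ i hi))).1 ?_ k hk
    rw [analyticOrderAt_mul (hP _ trivial) (hΘ _ (hpΩ i hi))]
    exact (hPp i hi).trans le_self_add
  · rw [← hPc k hk]
    refine (natCast_le_analyticOrderAt_sub_iff_iteratedDeriv_eq (hPΘ z₀ hz₀) (hP z₀ trivial)).1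
      ?_ k hk
    rw [show P * Θ - P = P * (Θ - 1) by ring,
      analyticOrderAt_mul (hP z₀ trivial) (g := Θ - 1) ((hΘ z₀ hz₀).sub analyticAt_const)]
    exact hΘ₁.trans le_add_self
  · calc ‖(P * Θ) z‖ = ‖P z‖ * ‖Θ z‖ := norm_mul _ _
      _ ≤ (max C 0 + 1) * (ε / (max C 0 + 1)) := by
          gcongr
          · exact (hC z hz).trans ((le_max_left _ _).trans (le_add_of_nonneg_right zero_le_one))
          · exact hΘε z hGz
      _ = ε := by field_simp

end Jets

section Exhaustion

variable {E : Type*} [NormedAddCommGroup E] (Ω : Set E) (r c : ℝ)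

theorem isCompact_setOf_norm_le_and_forall_le_dist [ProperSpace E] :
    IsCompact {x : E | ‖x‖ ≤ r ∧ ∀ w ∉ Ω, c ≤ dist x w} := by
  refine (isCompact_closedBall (0 : E) r).of_isClosed_subset ?_ fun x hx => by simpa using hx.1
  simp only [Set.ofPred_and, Set.ofPred_forall]
  exact (isClosed_le continuous_norm continuous_const).inter
    (isClosed_iInter fun w => isClosed_iInter fun _ =>
      isClosed_le continuous_const (continuous_id.dist continuous_const))

variable {Ω c} in
theorem setOf_norm_le_and_forall_le_dist_subset (hc : 0 < c) :
    {x : E | ‖x‖ ≤ r ∧ ∀ w ∉ Ω, c ≤ dist x w} ⊆ Ω := fun x hx => by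
  by_contra hxΩ
  simpa using hc.trans_le (hx.2 x hxΩ)

end Exhaustion

theorem eventually_notMem_of_forall_not_mapClusterPt {X ι : Type*} [TopologicalSpace X]
    {l : Filter ι} {u : ι → X} {Ω K : Set X} (hacc : ∀ p ∈ Ω, ¬ MapClusterPt p l u)
    (hK : IsCompact K) (hKΩ : K ⊆ Ω) : ∀ᶠ i in l, u i ∉ K := by
  by_contra h
  obtain ⟨p, hp, hcl⟩ :=
    hK.exists_mapClusterPt_of_frequently ((Filter.not_eventually.1 h).mono fun _ => not_not.1)
  exact hacc p (hKΩ hp) hcl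

section Poles

variable {𝕜 : Type*} [NormedField 𝕜] {x ζ β : 𝕜} {δ ε : ℝ}

theorem norm_le_and_forall_le_dist_of_le_norm_div {Ω : Set 𝕜} (hε : 0 < ε) (hδ : 0 < δ)
    (hβ : β ∉ Ω) (hβx : ∀ w ∉ Ω, dist x β ≤ dist x w) (hxβ : dist x β ≤ 1)
    (hζ : ∀ w ∉ Ω, δ ≤ dist ζ w) (h : ε ≤ ‖(x - β) / (ζ - β)‖) :
    ‖x‖ ≤ ‖ζ‖ + 1 / ε + 1 ∧ ∀ w ∉ Ω, ε * δ ≤ dist x w := by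
  have hζβ : δ ≤ dist ζ β := hζ β hβ
  rw [norm_div, ← dist_eq_norm, ← dist_eq_norm, le_div_iff₀ (hδ.trans_le hζβ)] at h
  refine ⟨?_, fun w hw => ?_⟩
  · have hζβ' : dist ζ β ≤ 1 / ε := by
      rw [le_div_iff₀ hε]; nlinarith
    have := dist_triangle4 x β ζ 0
    rw [dist_zero_right, dist_zero_right, dist_comm β ζ] at this
    linarith
  · calc ε * δ ≤ ε * dist ζ β := by gcongr
      _ ≤ dist x β := h
      _ ≤ dist x w := hβx w hw

theorem norm_le_of_le_norm_div (hε : 0 < ε) (hxβ : x ≠ β) (h : ε ≤ ‖(ζ - β) / (x - β)‖) :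
    ‖x‖ ≤ ‖β‖ + (‖ζ‖ + ‖β‖) / ε := by
  rw [norm_div, ← dist_eq_norm, ← dist_eq_norm, le_div_iff₀ (dist_pos.2 hxβ)] at h
  have hxβ' : dist x β ≤ (‖ζ‖ + ‖β‖) / ε := by
    rw [le_div_iff₀ hε]
    have := dist_triangle ζ 0 β
    rw [dist_zero_right, dist_zero_left] at this
    linarith
  have := dist_triangle x β 0
  rw [dist_zero_right, dist_zero_right] at this
  linarith

end Poles

theorem exists_differentiableOn_eq_one_and_mem_of_le_norm {Ω : Set ℂ} (hΩ : IsOpen Ω) {x b : ℂ}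
    (hx : x ∈ Ω) (hxb : x ≠ b) :
    ∃ g : ℂ → ℂ, DifferentiableOn ℂ g Ω ∧ g x = 1 ∧
      ∀ (ζ : ℂ) (δ ε : ℝ), 0 < ε → 0 < δ → (∀ w ∉ Ω, δ ≤ dist ζ w) → ε ≤ ‖g ζ‖ →
        ‖x‖ ≤ ‖ζ‖ + 1 / ε + 1 + ‖b‖ + (‖ζ‖ + ‖b‖) / ε ∧ ∀ w ∉ Ω, min (ε * δ) 1 ≤ dist x w := by
  by_cases hnear : ∃ β ∉ Ω, dist x β ≤ 1
  · obtain ⟨β₀, hβ₀, hxβ₀⟩ := hnear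
    obtain ⟨β, hβ, hd⟩ := hΩ.isClosed_compl.exists_infDist_eq_dist ⟨β₀, hβ₀⟩ x
    have hβx : ∀ w ∉ Ω, dist x β ≤ dist x w := fun w hw => hd ▸ infDist_le_dist_of_mem hw
    have hne : ∀ ζ ∈ Ω, ζ - β ≠ 0 := fun ζ hζ h => hβ (sub_eq_zero.1 h ▸ hζ)
    refine ⟨fun ζ => (x - β) / (ζ - β), (differentiableOn_const _).div (by fun_prop) hne,
      div_self (hne x hx), fun ζ δ ε hε hδ hζ h => ?_⟩
    obtain ⟨hxζ, hdist⟩ := norm_le_and_forall_le_dist_of_le_norm_div hε hδ hβ hβx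
      ((hβx β₀ hβ₀).trans hxβ₀) hζ h
    have : 0 ≤ (‖ζ‖ + ‖b‖) / ε := by positivity
    exact ⟨by linarith [norm_nonneg b], fun w hw => (min_le_left _ _).trans (hdist w hw)⟩
  · simp only [not_exists, not_and, not_le] at hnear
    refine ⟨fun ζ => (ζ - b) / (x - b), by fun_prop, div_self (sub_ne_zero.2 hxb),
      fun ζ _ ε hε _ _ h => ⟨?_, fun w hw => (min_le_right _ _).trans (hnear w hw).le⟩⟩
    have := norm_le_of_le_norm_div hε hxb h
    have : 0 ≤ 1 / ε := by positivity
    linarith [norm_nonneg ζ]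

theorem exists_seq_eq_one_tendstoLocallyUniformlyOn_zero {Ω : Set ℂ} (hΩ : IsOpen Ω)
    {z : ℕ → ℂ} (hz : ∀ n, z n ∈ Ω) (hacc : ∀ p ∈ Ω, ¬ MapClusterPt p atTop z) :
    ∃ G : ℕ → ℂ → ℂ, (∀ n, DifferentiableOn ℂ (G n) Ω) ∧ (∀ n, G n (z n) = 1) ∧
      TendstoLocallyUniformlyOn G 0 atTop Ω := by
  obtain ⟨b, hb⟩ := ((Set.countable_range z).dense_compl ℂ).nonempty
  choose G hGd hG₁ hGmem using fun n =>
    exists_differentiableOn_eq_one_and_mem_of_le_norm hΩ (hz n) fun h => hb ⟨n, h⟩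
  refine ⟨G, hGd, hG₁, ?_⟩
  rw [tendstoLocallyUniformlyOn_iff_forall_isCompact hΩ]
  intro K hKΩ hK
  rw [Metric.tendstoUniformlyOn_iff]
  intro ε hε
  obtain ⟨δ, hδ, hδK⟩ := hK.exists_cthickening_subset_open hΩ hKΩ
  have hKδ : ∀ ζ ∈ K, ∀ w ∉ Ω, δ ≤ dist ζ w := fun ζ hζ w hw => by
    by_contra! h
    exact hw (hδK (mem_cthickening_of_dist_le w ζ δ K hζ (by rw [dist_comm]; exact h.le)))
  obtain ⟨R, hR⟩ := hK.isBounded.exists_norm_le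
  filter_upwards [eventually_notMem_of_forall_not_mapClusterPt hacc
    (isCompact_setOf_norm_le_and_forall_le_dist Ω (R + 1 / ε + 1 + ‖b‖ + (R + ‖b‖) / ε) _)
    (setOf_norm_le_and_forall_le_dist_subset _ (lt_min (mul_pos hε hδ) one_pos))]
    with n hn ζ hζ
  by_contra! hsmall
  rw [Pi.zero_apply, dist_zero_left] at hsmall
  obtain ⟨hzn, hdist⟩ := hGmem n ζ δ ε hε hδ (hKδ ζ hζ) hsmall
  have hζR := hR ζ hζ
  exact hn ⟨hzn.trans (by gcongr), hdist⟩

theorem TendstoLocallyUniformlyOn.iteratedDeriv {E ι : Type*} [NormedAddCommGroup E]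
    [NormedSpace ℂ E] [CompleteSpace E] {l : Filter ι} {U : Set ℂ} {F : ι → ℂ → E} {f : ℂ → E}
    (h : TendstoLocallyUniformlyOn F f l U) (hF : ∀ᶠ i in l, DifferentiableOn ℂ (F i) U)
    (hU : IsOpen U) (k : ℕ) :
    TendstoLocallyUniformlyOn (fun i => iteratedDeriv k (F i)) (iteratedDeriv k f) l U := by
  induction k generalizing F f with
  | zero => simpa using h
  | succ k ih =>
    simp only [iteratedDeriv_succ']
    exact ih (h.deriv hF hU) (hF.mono fun i hi => hi.deriv hU)

theorem tendstoLocallyUniformlyOn_tsum_of_eventually_norm_le {α E : Type*} [TopologicalSpace α]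
    [LocallyCompactSpace α] [NormedAddCommGroup E] [CompleteSpace E] {F : ℕ → α → E}
    {u : ℕ → ℝ} {U : Set α} (hU : IsOpen U) (hu : Summable u)
    (hF : ∀ K ⊆ U, IsCompact K → ∀ᶠ n in atTop, ∀ x ∈ K, ‖F n x‖ ≤ u n) :
    TendstoLocallyUniformlyOn (fun N x => ∑ n ∈ range N, F n x) (fun x => ∑' n, F n x) atTop U := by
  rw [tendstoLocallyUniformlyOn_iff_forall_isCompact hU]
  intro K hKU hK v hv
  exact tendsto_finset_range.eventually (tendstoUniformlyOn_tsum_of_cofinite_eventually hu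
    (Nat.cofinite_eq_atTop ▸ hF K hKU hK) v hv)

theorem exists_seq_iteratedDeriv_partialSum_eq_of_step {𝕜 : Type*} [NontriviallyNormedField 𝕜]
    [CompleteSpace 𝕜] {Ω : Set 𝕜} {z : ℕ → 𝕜} (hz : ∀ n, z n ∈ Ω) (e : ℕ → ℕ)
    (t : ℕ → ℕ → 𝕜) (P : ℕ → (𝕜 → 𝕜) → Prop)
    (hstep : ∀ n (d : ℕ → 𝕜), ∃ F : 𝕜 → 𝕜, AnalyticOnNhd 𝕜 F Ω ∧
      (∀ j ∈ range n, ∀ k < e j, iteratedDeriv k F (z j) = 0) ∧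
      (∀ k < e n, iteratedDeriv k F (z n) = d k) ∧ P n F) :
    ∃ F : ℕ → 𝕜 → 𝕜, (∀ n, AnalyticOnNhd 𝕜 (F n) Ω ∧ P n (F n)) ∧
      ∀ j N, j < N → ∀ k < e j, iteratedDeriv k (fun x => ∑ i ∈ range N, F i x) (z j) = t j k := by
  choose Φ hΦ hΦvan hΦjet hΦP using hstep
  let σ : ℕ → 𝕜 → 𝕜 := fun N => Nat.rec 0
    (fun n s => s + Φ n fun k => t n k - iteratedDeriv k s (z n)) N
  set F : ℕ → 𝕜 → 𝕜 := fun n => Φ n fun k => t n k - iteratedDeriv k (σ n) (z n)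
  have hσ : ∀ N, σ N = fun x => ∑ i ∈ range N, F i x := by
    intro N
    induction N with
    | zero => rfl
    | succ N ih => ext x; rw [sum_range_succ, ← congrFun ih x]; rfl
  have hσan : ∀ N, AnalyticOnNhd 𝕜 (σ N) Ω := by
    intro N
    induction N with
    | zero => exact fun _ _ => analyticAt_const
    | succ N ih => exact ih.add (hΦ N _)
  refine ⟨F, fun n => ⟨hΦ n _, hΦP n _⟩, fun j N hjN k hk => ?_⟩
  rw [← hσ N]
  induction N, hjN using Nat.le_induction with
  | base =>
    show iteratedDeriv k (σ j + F j) (z j) = _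
    rw [iteratedDeriv_add (hσan j _ (hz j)).contDiffAt (hΦ j _ _ (hz j)).contDiffAt,
      hΦjet j _ k hk, add_sub_cancel]
  | succ N hjN ih =>
    show iteratedDeriv k (σ N + F N) (z j) = _
    rw [iteratedDeriv_add (hσan N _ (hz j)).contDiffAt (hΦ N _ _ (hz j)).contDiffAt,
      hΦvan N _ j (mem_range.2 hjN) k hk, ih, add_zero]

theorem exists_seq_iteratedDeriv_partialSum_eq {Ω : Set ℂ} (hΩ : IsOpen Ω) {z : ℕ → ℂ}
    (hz : ∀ n, z n ∈ Ω) (hinj : Function.Injective z)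
    (hacc : ∀ p ∈ Ω, ¬ MapClusterPt p atTop z) (m : ℕ → ℕ) (w : ℕ → ℕ → ℂ) :
    ∃ F : ℕ → ℂ → ℂ, (∀ n, DifferentiableOn ℂ (F n) Ω) ∧
      (∀ K ⊆ Ω, IsCompact K → ∀ᶠ n in atTop, ∀ ζ ∈ K, ‖F n ζ‖ ≤ (1 / 2) ^ n) ∧
      ∀ j N, j < N → ∀ k ≤ m j,
        iteratedDeriv k (fun ζ => ∑ i ∈ range N, F i ζ) (z j) = k ! * w j k := by
  obtain ⟨G, hGd, hG₁, hG₀⟩ := exists_seq_eq_one_tendstoLocallyUniformlyOn_zero hΩ hz hacc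
  obtain ⟨F, hF, hFjet⟩ := exists_seq_iteratedDeriv_partialSum_eq_of_step hz (fun j => m j + 1)
    (fun j k => k ! * w j k)
    (fun n F => ∀ ζ ∈ closedBall 0 n, ‖G n ζ‖ ≤ 1 / 2 → ‖F ζ‖ ≤ (1 / 2) ^ n)
    fun n d => exists_analyticOnNhd_iteratedDeriv_eq_and_norm_le (range n) z (fun j => m j + 1)
      ((hGd n).analyticOnNhd hΩ) (hz n) (hG₁ n) (fun j _ => hz j)
      (fun j hj => hinj.ne (mem_range.1 hj).ne) d (m n + 1) (isCompact_closedBall 0 n)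
      (by positivity)
  refine ⟨F, fun n => (hF n).1.differentiableOn, fun K hKΩ hK => ?_,
    fun j N hjN k hk => hFjet j N hjN k (Nat.lt_succ_of_le hk)⟩
  obtain ⟨R, hR⟩ := hK.isBounded.exists_norm_le
  have hGK := Metric.tendstoUniformlyOn_iff.1
    ((tendstoLocallyUniformlyOn_iff_forall_isCompact hΩ).1 hG₀ K hKΩ hK) (1 / 2) (by norm_num)
  filter_upwards [hGK, eventually_ge_atTop ⌈R⌉₊] with n hGn hn ζ hζ
  refine (hF n).2 ζ (mem_closedBall_zero_iff.2 ((hR ζ hζ).trans (Nat.ceil_le.1 hn))) ?_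
  simpa using (hGn ζ hζ).le

theorem analytic_interpolation_general (Ω : Set ℂ) (hΩ : IsOpen Ω)
    (z : ℕ → ℂ) (hz : ∀ n, z n ∈ Ω) (hinj : Function.Injective z)
    (hacc : ∀ p ∈ Ω, ¬ MapClusterPt p Filter.atTop z)
    (m : ℕ → ℕ) (w : ℕ → ℕ → ℂ) :
    ∃ f : ℂ → ℂ, DifferentiableOn ℂ f Ω ∧
      ∀ n : ℕ, ∀ k : ℕ, 1 ≤ k → k ≤ m n →
        iteratedDeriv k f (z n) = (Nat.factorial k : ℂ) * w n k := by
  obtain ⟨F, hF, hFsmall, hFjet⟩ := exists_seq_iteratedDeriv_partialSum_eq hΩ hz hinj hacc m w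
  have hS := tendstoLocallyUniformlyOn_tsum_of_eventually_norm_le hΩ summable_geometric_two hFsmall
  have hSd : ∀ᶠ N in atTop, DifferentiableOn ℂ (fun ζ => ∑ i ∈ range N, F i ζ) Ω :=
    .of_forall fun N => .fun_sum fun i _ => hF i
  refine ⟨_, hS.differentiableOn hSd hΩ, fun j k _ hk => ?_⟩
  refine tendsto_nhds_unique ((hS.iteratedDeriv hSd hΩ k).tendsto_at (hz j))
    (tendsto_const_nhds.congr' ?_)
  filter_upwards [eventually_gt_atTop j] with N hN using (hFjet j N hN k hk).symm

/-- Interpolation theorem for analytic functions (Rudin 15.13): let `Ω ⊆ ℂ` be a nonempty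
open connected set and `{zₙ}` a sequence of distinct points of `Ω` with no limit point in
`Ω`. Then for every sequence of positive integers `{mₙ}` and every choice of complex numbers
`w_{k,n}` (`1 ≤ k ≤ mₙ`) there is an analytic function `f` on `Ω` with
`f^{(k)}(zₙ) = k! · w_{k,n}` for all `n` and `1 ≤ k ≤ mₙ`. -/
theorem analytic_interpolation (Ω : Set ℂ) (hΩ : IsOpen Ω) (hne : Ω.Nonempty)
    (hconn : IsConnected Ω) (z : ℕ → ℂ) (hz : ∀ n, z n ∈ Ω) (hinj : Function.Injective z)
    (hacc : ∀ p ∈ Ω, ¬ MapClusterPt p Filter.atTop z)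
    (m : ℕ → ℕ) (hm : ∀ n, 0 < m n) (w : ℕ → ℕ → ℂ) :
    ∃ f : ℂ → ℂ, DifferentiableOn ℂ f Ω ∧
      ∀ n : ℕ, ∀ k : ℕ, 1 ≤ k → k ≤ m n →
        iteratedDeriv k f (z n) = (Nat.factorial k : ℂ) * w n k :=
  analytic_interpolation_general Ω hΩ z hz hinj hacc m w
end
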